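/- arXiv:0905.1322 — 8 statements merged into one kernel-verified Lean document; each statement's English description precedes it below -/
import Mathlib

section
/- Let G be a finitely generated group and let K ≤ H be subgroups of G of finite index. Then (d(K) - 1)·[G : H] ≤ (d(H) - 1)·[G : K], where the inequality is between integers. -/
/-- `minGens G` is `d(G)`, the minimal number of generators of the group `G`. -/
noncomputable def minGens (G : Type*) [Group G] : ℕ :=
  sInf {n : ℕ | ∃ S : Finset G, S.card = n ∧ Subgroup.closure (S : Set G) = ⊤}

/-!
The heart is the sharp form of Schreier's lemma: a subgroup `H` of index `n` in a group generated
by `d` elements is generated by `n (d - 1) + 1` elements. Grow a right transversal `R` of `H`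
from `1`, each new representative being `r s` or `r s⁻¹` with `r ∈ R` and `s` a generator, so
that `R` spans a tree in the Schreier coset graph. Of the `n d` Schreier generators
`r s ρ(r s)⁻¹` (`ρ(g) ∈ R` the representative of `H g`), the `n - 1` along tree edges are
trivial. Applying this to `K` inside `H` and multiplying by `[G : H]` gives the theorem, since
`[H : K] [G : H] = [G : K]`.
-/

open Finset Pointwise

namespace Subgroup

variable {G : Type*} [Group G]

theorem IsComplement.toRightFun_coe {H : Subgroup G} {T : Set G} (hT : IsComplement (H : Set G) T)
    {t : G} (ht : t ∈ T) : (hT.toRightFun t : G) = t :=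
  congrArg Subtype.val (hT.rightQuotientEquiv.apply_symm_apply ⟨t, ht⟩)

abbrev rightCosetMk (H : Subgroup G) (g : G) : Quotient (QuotientGroup.rightRel H) :=
  Quotient.mk'' g

theorem rightCosetMk_eq_iff {H : Subgroup G} {a b : G} :
    H.rightCosetMk a = H.rightCosetMk b ↔ b * a⁻¹ ∈ H :=
  Quotient.eq''.trans QuotientGroup.rightRel_apply

theorem rightCosetMk_mul {H : Subgroup G} {a b : G} (h : H.rightCosetMk a = H.rightCosetMk b)
    (g : G) : H.rightCosetMk (a * g) = H.rightCosetMk (b * g) := by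
  rw [rightCosetMk_eq_iff] at h ⊢
  simpa [mul_assoc] using h

theorem forall_rightCosetMk_mem_image {H : Subgroup G} {S R : Set G} (hS : closure S = ⊤)
    (hR1 : (1 : G) ∈ R)
    (hmul : ∀ r ∈ R, ∀ s ∈ S, H.rightCosetMk (r * s) ∈ H.rightCosetMk '' R)
    (hmul_inv : ∀ r ∈ R, ∀ s ∈ S, H.rightCosetMk (r * s⁻¹) ∈ H.rightCosetMk '' R) (g : G) :
    H.rightCosetMk g ∈ H.rightCosetMk '' R := by
  induction hS ▸ mem_top g using closure_induction_right with
  | one => exact ⟨1, hR1, rfl⟩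
  | mul_right g _ s hs ih =>
    obtain ⟨r, hr, hrg⟩ := ih
    exact rightCosetMk_mul hrg s ▸ hmul r hr s hs
  | mul_inv_cancel g _ s hs ih =>
    obtain ⟨r, hr, hrg⟩ := ih
    exact rightCosetMk_mul hrg s⁻¹ ▸ hmul_inv r hr s hs

theorem nat_card_rightQuotient (H : Subgroup G) :
    Nat.card (Quotient (QuotientGroup.rightRel H)) = H.index := by
  rw [index_eq_card, Nat.card_congr (QuotientGroup.quotientRightRelEquivQuotientLeftRel H)]

theorem index_le_card_of_forall_rightCosetMk_mem_image {H : Subgroup G} {R : Finset G}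
    (hcov : ∀ g : G, H.rightCosetMk g ∈ H.rightCosetMk '' R) : H.index ≤ #R := by
  have hsurj : Function.Surjective ((R : Set G).domRestrict H.rightCosetMk) := by
    rintro ⟨g⟩
    obtain ⟨r, hr, hrg⟩ := hcov g
    exact ⟨⟨r, hr⟩, hrg⟩
  simpa [nat_card_rightQuotient] using Nat.card_le_card_of_surjective _ hsurj

theorem isComplement_of_injOn_of_card_eq {H : Subgroup G} [H.FiniteIndex] {R : Finset G}
    (hR : Set.InjOn H.rightCosetMk R) (hcard : #R = H.index) : IsComplement (H : Set G) R := by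
  have : Finite (Quotient (QuotientGroup.rightRel H)) :=
    .of_equiv _ (QuotientGroup.quotientRightRelEquivQuotientLeftRel H).symm
  rw [isComplement_subgroup_left_iff_bijective, Nat.bijective_iff_injective_and_card]
  exact ⟨hR.injective, by simp [nat_card_rightQuotient, hcard]⟩

section SchreierTree

variable [DecidableEq G]

def schreierEdges (R S : Finset G) : Finset (G × G) :=
  {p ∈ R ×ˢ S | p.1 * p.2 ∈ R}

theorem schreierEdges_subset_product {R S : Finset G} : schreierEdges R S ⊆ R ×ˢ S :=
  filter_subset _ _

theorem schreierEdges_mono {R R' S : Finset G} (h : R ⊆ R') :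
    schreierEdges R S ⊆ schreierEdges R' S := fun p hp => by
  simp only [schreierEdges, mem_filter, mem_product] at hp ⊢
  exact ⟨⟨h hp.1.1, hp.1.2⟩, h hp.2⟩

/-- Each edge of the Schreier graph inside `R` makes one Schreier generator trivial; the edge count
`#R - 1` is what a spanning tree on `R` provides. -/
structure IsSchreierPartialTransversal (H : Subgroup G) (S R : Finset G) : Prop where
  one_mem : (1 : G) ∈ R
  injOn : Set.InjOn H.rightCosetMk R
  card_le : #R ≤ #(schreierEdges R S) + 1

namespace IsSchreierPartialTransversal

variable {H : Subgroup G} {S R : Finset G}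

theorem singleton_one : H.IsSchreierPartialTransversal S {1} :=
  ⟨mem_singleton_self 1, by simp, by simp⟩

theorem insert_of_mem_schreierEdges (hR : H.IsSchreierPartialTransversal S R) {t : G}
    (ht : H.rightCosetMk t ∉ H.rightCosetMk '' R) {e : G × G} (he : e ∉ schreierEdges R S)
    (he' : e ∈ schreierEdges (insert t R) S) :
    H.IsSchreierPartialTransversal S (insert t R) := by
  have htR : t ∉ R := fun h => ht ⟨t, h, rfl⟩
  refine ⟨mem_insert_of_mem hR.one_mem, ?_, ?_⟩
  · rw [coe_insert, Set.injOn_insert htR]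
    exact ⟨hR.injOn, ht⟩
  · have hE : schreierEdges R S ⊂ schreierEdges (insert t R) S :=
      Finset.ssubset_iff_subset_ne.mpr
        ⟨schreierEdges_mono (subset_insert t R), fun h => he (h ▸ he')⟩
    have := card_lt_card hE
    have := hR.card_le
    rw [card_insert_of_notMem htR]
    omega

theorem exists_insert (hR : H.IsSchreierPartialTransversal S R) (hS : closure (S : Set G) = ⊤)
    (hcov : ∃ g : G, H.rightCosetMk g ∉ H.rightCosetMk '' R) :
    ∃ t ∉ R, H.IsSchreierPartialTransversal S (insert t R) := by
  obtain ⟨r, hr, s, hs, hrs⟩ : ∃ r ∈ R, ∃ s ∈ S, H.rightCosetMk (r * s) ∉ H.rightCosetMk '' R ∨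
      H.rightCosetMk (r * s⁻¹) ∉ H.rightCosetMk '' R := by
    by_contra! h
    obtain ⟨g, hg⟩ := hcov
    exact hg (forall_rightCosetMk_mem_image hS hR.one_mem (fun r hr s hs => (h r hr s hs).1)
      (fun r hr s hs => (h r hr s hs).2) g)
  rcases hrs with ht | ht
  · have htR : r * s ∉ R := fun h => ht ⟨_, h, rfl⟩
    refine ⟨r * s, htR, hR.insert_of_mem_schreierEdges ht (e := (r, s)) ?_ ?_⟩ <;>
      simp [schreierEdges, hr, hs, htR]
  · have htR : r * s⁻¹ ∉ R := fun h => ht ⟨_, h, rfl⟩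
    refine ⟨r * s⁻¹, htR, hR.insert_of_mem_schreierEdges ht (e := (r * s⁻¹, s)) ?_ ?_⟩ <;>
      simp [schreierEdges, hr, hs, htR]

end IsSchreierPartialTransversal

theorem exists_isSchreierPartialTransversal_card_eq_index (H : Subgroup G) [H.FiniteIndex]
    {S : Finset G} (hS : closure (S : Set G) = ⊤) :
    ∃ R, H.IsSchreierPartialTransversal S R ∧ #R = H.index := by
  suffices ∀ k < H.index, ∃ R, H.IsSchreierPartialTransversal S R ∧ #R = k + 1 by
    obtain ⟨n, hn⟩ := Nat.exists_eq_add_one_of_ne_zero (FiniteIndex.index_ne_zero (H := H))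
    exact hn ▸ this n (by omega)
  intro k hk
  induction k with
  | zero => exact ⟨{1}, .singleton_one, rfl⟩
  | succ k ih =>
    obtain ⟨R, hR, hRcard⟩ := ih (by omega)
    have hcov : ∃ g : G, H.rightCosetMk g ∉ H.rightCosetMk '' R := by
      by_contra! h
      have := index_le_card_of_forall_rightCosetMk_mem_image h
      omega
    obtain ⟨t, htR, hR'⟩ := hR.exists_insert hS hcov
    exact ⟨_, hR', by rw [card_insert_of_notMem htR, hRcard]⟩

end SchreierTree

theorem exists_finset_card_add_index_le (H : Subgroup G) [H.FiniteIndex] {S : Finset G}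
    (hS : closure (S : Set G) = ⊤) :
    ∃ T : Finset H, #T + H.index ≤ H.index * #S + 1 ∧ closure (T : Set H) = ⊤ := by
  classical
  obtain ⟨R, hR, hRcard⟩ := exists_isSchreierPartialTransversal_card_eq_index H hS
  have hRc := isComplement_of_injOn_of_card_eq hR.injOn hRcard
  let gen : G → H := fun g => ⟨g * (hRc.toRightFun g : G)⁻¹, hRc.mul_inv_toRightFun_mem g⟩
  refine ⟨((R ×ˢ S) \ schreierEdges R S).image (fun p => gen (p.1 * p.2)), ?_, ?_⟩
  · have hT := card_image_le (s := (R ×ˢ S) \ schreierEdges R S) (f := fun p => gen (p.1 * p.2))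
    have hE := card_le_card (schreierEdges_subset_product (R := R) (S := S))
    rw [card_sdiff_of_subset schreierEdges_subset_product, card_product, hRcard] at hT
    rw [card_product, hRcard] at hE
    have := hR.card_le
    omega
  · rw [eq_top_iff, ← closure_mul_image_eq_top' hRc hR.one_mem hS, closure_le]
    intro x hx
    obtain ⟨_, hrs, rfl⟩ := mem_image.mp hx
    obtain ⟨r, hr, s, hs, rfl⟩ := mem_mul.mp hrs
    by_cases hrsR : r * s ∈ R
    · have : gen (r * s) = 1 := by simp [gen, hRc.toRightFun_coe hrsR]
      simp [gen, this]
    · exact subset_closure (mem_image.mpr ⟨(r, s), by simp [schreierEdges, hr, hs, hrsR], rfl⟩)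

theorem rank_sub_one_le_index_mul_rank_sub_one [Group.FG G] (H : Subgroup G) [H.FiniteIndex] :
    (Group.rank H : ℤ) - 1 ≤ H.index * ((Group.rank G : ℤ) - 1) := by
  obtain ⟨S, hS, hSgen⟩ := Group.rank_spec G
  obtain ⟨T, hT, hTgen⟩ := exists_finset_card_add_index_le H hSgen
  have := Group.rank_le hTgen
  rw [hS] at hT
  linarith [(Nat.cast_le (α := ℤ)).mpr hT, (Nat.cast_le (α := ℤ)).mpr this]

end Subgroup

theorem minGens_eq_rank (G : Type*) [Group G] [Group.FG G] : minGens G = Group.rank G :=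
  Nat.sInf_def _

theorem minGens_sub_one_div_index_antitone_general
    {G : Type*} [Group G] (hFG : Group.FG G) (H K : Subgroup G) (hKH : K ≤ H)
    (hK : K.FiniteIndex) :
    ((minGens ↥K : ℤ) - 1) * (H.index : ℤ) ≤ ((minGens ↥H : ℤ) - 1) * (K.index : ℤ) := by
  have : H.FiniteIndex := Subgroup.finiteIndex_of_le hKH
  have hrank := Subgroup.rank_sub_one_le_index_mul_rank_sub_one (K.subgroupOf H)
  rw [Group.rank_congr (Subgroup.subgroupOfEquivOfLe hKH)] at hrank
  rw [minGens_eq_rank, minGens_eq_rank, ← Subgroup.relIndex_mul_index hKH, Subgroup.relIndex]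
  calc ((Group.rank K : ℤ) - 1) * H.index
      ≤ (K.subgroupOf H).index * ((Group.rank H : ℤ) - 1) * H.index :=
        mul_le_mul_of_nonneg_right hrank (Nat.cast_nonneg _)
    _ = ((Group.rank H : ℤ) - 1) * ((K.subgroupOf H).index * H.index : ℕ) := by push_cast; ring

/-- **Lemma 2.1.** If `K ≤ H` are finite-index subgroups of a finitely generated group
`G`, then `(d(K) - 1)·[G : H] ≤ (d(H) - 1)·[G : K]`. -/
theorem minGens_sub_one_div_index_antitone
    {G : Type*} [Group G] (hFG : Group.FG G) (H K : Subgroup G) (hKH : K ≤ H)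
    (hH : H.FiniteIndex) (hK : K.FiniteIndex) :
    ((minGens ↥K : ℤ) - 1) * (H.index : ℤ) ≤ ((minGens ↥H : ℤ) - 1) * (K.index : ℤ) :=
  minGens_sub_one_div_index_antitone_general hFG H K hKH hK
end

section
/- Let F be a free group of finite rank d, let R ⊆ F be a finite subset with |R| = r, and let G = F/⟪R⟫^F. Let H be a subgroup of G of finite index j = [G : H]. Then there exist a free group F' of rank (d - 1)·j + 1 and a finite subset R' ⊆ F' with |R'| ≤ r·j such that H ≅ F'/⟪R'⟫^{F'}. In particular, ((d-1)j + 1) - rj - 1 ≥ (d - r - 1)·j. -/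
/-!
Let `K ≤ F` be the preimage of `H`, so `[F : K] = j` and `K` contains `⟪R⟫^F`. By
Nielsen–Schreier, `K` is the vertex group of the action groupoid of `F` on `F ⧸ K`, a free
groupoid whose generating graph has `j` vertices and `d·j` edges. Collapsing a spanning tree,
which has `j - 1` edges, shows that `K` is free on the `(d - 1)·j + 1` remaining edges.
Writing an element of `F` as `t·k` with `t` in a left transversal of `K` and `k ∈ K`, every
`F`-conjugate of a relator `ρ` is a `K`-conjugate of some `t⁻¹ρt`, so `H ≅ K ⧸ (⟪R⟫^F ⊓ K)`
is presented by these `r·j` elements.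
-/

universe u

open CategoryTheory Quiver IsFreeGroupoid

namespace Quiver.Arborescence

variable {V : Type*} [Quiver V] [Arborescence V]

theorem default_eq_cons {a b : V} (e : a ⟶ b) :
    (default : Path (Quiver.root V) b) = (default : Path (Quiver.root V) a).cons e :=
  Subsingleton.elim _ _

theorem ne_root_of_hom {a b : V} (e : a ⟶ b) : b ≠ Quiver.root V := by
  rintro rfl
  exact Path.nil_ne_cons default e (Subsingleton.elim _ _)

theorem isEmpty_hom_of_hom {a b : V} (e : a ⟶ b) : IsEmpty (b ⟶ a) := by
  refine ⟨fun f => ?_⟩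
  have h₁ := congrArg Path.length (default_eq_cons e)
  have h₂ := congrArg Path.length (default_eq_cons f)
  simp only [Path.length_cons] at h₁ h₂
  omega

theorem total_eq_of_right_eq {e e' : Total V} (h : e.right = e'.right) : e = e' := by
  obtain ⟨a, b, e⟩ := e
  obtain ⟨a', b', e'⟩ := e'
  obtain rfl : b = b' := h
  have hp := (default_eq_cons e).symm.trans (default_eq_cons e')
  exact Total.ext (Path.obj_eq_of_cons_eq_cons hp) rfl (Path.hom_heq_of_cons_eq_cons hp)

theorem exists_total_right_eq {b : V} (hb : b ≠ Quiver.root V) : ∃ e : Total V, e.right = b := by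
  have hlen : (default : Path (Quiver.root V) b).length ≠ 0 := fun h =>
    hb (Path.eq_of_length_zero _ h).symm
  obtain ⟨c, -, e, -⟩ := (Path.length_ne_zero_iff_eq_cons _).mp hlen
  exact ⟨⟨c, b, e⟩, rfl⟩

noncomputable def totalEquivComplRoot : Total V ≃ ({Quiver.root V}ᶜ : Set V) :=
  Equiv.ofBijective (fun e => ⟨e.right, ne_root_of_hom e.hom⟩)
    ⟨fun _ _ h => total_eq_of_right_eq (congrArg Subtype.val h),
      fun b => (exists_total_right_eq b.2).imp fun _ h => Subtype.ext h⟩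

theorem card_total_add_one [Finite V] : Nat.card (Total V) + 1 = Nat.card V := by
  rw [Nat.card_congr totalEquivComplRoot, Nat.card_coe_set_eq, add_comm,
    ← Set.ncard_singleton (Quiver.root V), Set.ncard_add_ncard_compl]

end Quiver.Arborescence

namespace WideSubquiver

variable {V : Type*} [Quiver V] (H : WideSubquiver (Symmetrify V))

def desymmetrifyTotal : Total H → Total V
  | ⟨a, b, ⟨.inl e, _⟩⟩ => ⟨a, b, e⟩
  | ⟨a, b, ⟨.inr e, _⟩⟩ => ⟨b, a, e⟩

theorem range_desymmetrifyTotal :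
    Set.range H.desymmetrifyTotal = wideSubquiverEquivSetTotal (wideSubquiverSymmetrify H) := by
  refine le_antisymm ?_ fun ⟨a, b, e⟩ => ?_
  · rintro _ ⟨⟨a, b, ⟨e | e, he⟩⟩, rfl⟩
    exacts [Or.inl he, Or.inr he]
  · rintro (he | he)
    exacts [⟨⟨a, b, ⟨.inl e, he⟩⟩, rfl⟩, ⟨⟨b, a, ⟨.inr e, he⟩⟩, rfl⟩]

theorem desymmetrifyTotal_injective [Arborescence H] : Function.Injective H.desymmetrifyTotal := by
  rintro ⟨a, b, ⟨e | e, he⟩⟩ ⟨a', b', ⟨e' | e', he'⟩⟩ h <;> cases h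
  · rfl
  · exact ((Arborescence.isEmpty_hom_of_hom (show a ⟶ b from ⟨.inl e, he⟩)).false
      ⟨.inr e, he'⟩).elim
  · exact ((Arborescence.isEmpty_hom_of_hom (show b ⟶ a from ⟨.inl e, he'⟩)).false
      ⟨.inr e, he⟩).elim
  · rfl

theorem card_wideSubquiverSymmetrify [Arborescence H] :
    Nat.card (wideSubquiverEquivSetTotal (wideSubquiverSymmetrify H)) = Nat.card (Total H) := by
  rw [← range_desymmetrifyTotal, Nat.card_range_of_injective H.desymmetrifyTotal_injective]

end WideSubquiver

namespace IsFreeGroupoid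

variable (G A : Type u) [Group G] [IsFreeGroup G] [MulAction G A]

noncomputable def totalGeneratorsActionEquiv :
    Total (Generators (ActionCategory G A)) ≃ IsFreeGroup.Generators G × A where
  toFun e := (e.hom.1, e.left.back)
  invFun p := ⟨ActionCategory.objEquiv G A p.2,
    ActionCategory.objEquiv G A (IsFreeGroup.of p.1 • p.2), ⟨p.1, rfl⟩⟩
  left_inv := by
    rintro ⟨⟨⟨⟩, a⟩, ⟨⟨⟩, b⟩, ⟨e, he⟩⟩
    obtain rfl : _ = b := he
    rfl
  right_inv _ := rfl

theorem card_total_generators_actionCategory :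
    Nat.card (Total (Generators (ActionCategory G A))) =
      Nat.card (IsFreeGroup.Generators G) * Nat.card A := by
  rw [Nat.card_congr (totalGeneratorsActionEquiv G A), Nat.card_prod]

end IsFreeGroupoid

namespace IsFreeGroupoid.SpanningTree

variable {G : Type u} [Groupoid.{u} G] [IsFreeGroupoid G]
  (T : WideSubquiver (Symmetrify (Generators G))) [Arborescence T]

/-- `root T`, seen as an object of `G` rather than of the type synonym `T`. -/
abbrev treeRoot : G := root T

abbrev cotreeArrows : Set (Total (Generators G)) :=
  (wideSubquiverEquivSetTotal (wideSubquiverSymmetrify T))ᶜ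

section

variable {T} {X : Type u} [Group X] {F : G ⥤ CategoryTheory.SingleObj X}
  (hF : ∀ (a b : Generators G) (e : a ⟶ b), e ∈ wideSubquiverSymmetrify T a b → F.map (of e) = 1)
include hF

theorem map_homOfPath_eq_one {a : G} (p : Path (root T) a) : F.map (homOfPath T p) = 1 := by
  induction p with
  | nil => exact F.map_id _
  | cons p e ih =>
    erw [homOfPath.eq_2, F.map_comp, SingleObj.comp_as_mul, ih, mul_one]
    rcases e with ⟨e | e, he⟩
    · exact hF _ _ e (Or.inl he)
    · rw [F.map_inv, SingleObj.inv_as_inv, inv_eq_one]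
      exact hF _ _ e (Or.inr he)

theorem map_loopOfHom {a b : G} (q : a ⟶ b) : F.map (loopOfHom T q) = F.map q := by
  simp only [loopOfHom, treeHom, Functor.map_comp, Functor.map_inv, SingleObj.comp_as_mul,
    SingleObj.inv_as_inv, map_homOfPath_eq_one hF, inv_one, one_mul, mul_one]

end

theorem loopOfHom_treeRoot (x : End (treeRoot T)) : loopOfHom T x = x := by
  have h : treeHom T (treeRoot T) = 𝟙 _ := treeHom_root T
  simp only [loopOfHom, h]
  erw [IsIso.inv_id, Category.id_comp, Category.comp_id]

noncomputable def cotreeLoop (e : cotreeArrows T) : End (treeRoot T) :=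
  loopOfHom T (of e.1.hom)

theorem endHom_ext {X : Type u} [Group X] {E₁ E₂ : End (treeRoot T) →* X}
    (h : ∀ e, E₁ (cotreeLoop T e) = E₂ (cotreeLoop T e)) : E₁ = E₂ := by
  have hfun : functorOfMonoidHom T E₁ = functorOfMonoidHom T E₂ := by
    refine ext_functor _ _ fun a b e => ?_
    change E₁ (loopOfHom T (of e)) = E₂ (loopOfHom T (of e))
    by_cases he : e ∈ wideSubquiverSymmetrify T a b
    · rw [loopOfHom_eq_id T e he, ← End.one_def]
      exact E₁.map_one.trans E₂.map_one.symm
    · exact h ⟨⟨a, b, e⟩, he⟩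
  ext x
  have hx : (functorOfMonoidHom T E₁).map x = (functorOfMonoidHom T E₂).map x := by rw [hfun]
  change E₁ (loopOfHom T x) = E₂ (loopOfHom T x) at hx
  rwa [loopOfHom_treeRoot] at hx

open scoped Classical in
noncomputable def collapse : G ⥤ CategoryTheory.SingleObj (FreeGroup (cotreeArrows T)) :=
  Classical.choose (unique_lift fun a b e =>
    if h : e ∈ wideSubquiverSymmetrify T a b then 1 else FreeGroup.of ⟨⟨a, b, e⟩, h⟩).exists

open scoped Classical in
omit [Arborescence T] in
theorem collapse_map_of {a b : Generators G} (e : a ⟶ b) : (collapse T).map (of e) =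
    if h : e ∈ wideSubquiverSymmetrify T a b then 1 else FreeGroup.of ⟨⟨a, b, e⟩, h⟩ :=
  Classical.choose_spec (unique_lift _).exists a b e

theorem collapse_map_cotreeLoop (e : cotreeArrows T) :
    (collapse T).map (cotreeLoop T e) = FreeGroup.of e := by
  have h1 := map_loopOfHom (fun _ _ e he => (collapse_map_of T e).trans (dif_pos he)) (of e.1.hom)
  have h2 := (collapse_map_of T e.1.hom).trans (dif_neg e.2)
  exact h1.trans h2

noncomputable def endMulEquivFreeGroup : End (treeRoot T) ≃* FreeGroup (cotreeArrows T) :=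
  MonoidHom.toMulEquiv ((collapse T).mapEnd (treeRoot T)) (FreeGroup.lift (cotreeLoop T))
    (endHom_ext T fun e => by
      change FreeGroup.lift _ ((collapse T).map _) = _
      rw [collapse_map_cotreeLoop, FreeGroup.lift_apply_of]
      rfl)
    (FreeGroup.ext_hom _ _ fun e => by
      rw [MonoidHom.comp_apply, FreeGroup.lift_apply_of]
      exact collapse_map_cotreeLoop T e)

theorem card_cotreeArrows_add_card [Finite G] [Finite (Total (Generators G))] :
    Nat.card (cotreeArrows T) + Nat.card G = Nat.card (Total (Generators G)) + 1 := by
  have : Finite T := ‹Finite G›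
  have htree : Nat.card (Total T) + 1 = Nat.card G := Arborescence.card_total_add_one
  have hcompl : Nat.card (wideSubquiverEquivSetTotal (wideSubquiverSymmetrify T)) +
      Nat.card (cotreeArrows T) = Nat.card (Total (Generators G)) := by
    simp only [Nat.card_coe_set_eq]
    exact Set.ncard_add_ncard_compl _
  have hsymm := T.card_wideSubquiverSymmetrify
  omega

end IsFreeGroupoid.SpanningTree

open CategoryTheory.ActionCategory in
theorem Subgroup.exists_mulEquiv_freeGroup_of_finiteIndex {G : Type u} [Group G] [IsFreeGroup G]
    [Finite (IsFreeGroup.Generators G)] (K : Subgroup G) [K.FiniteIndex] :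
    ∃ n : ℕ, n + K.index = Nat.card (IsFreeGroup.Generators G) * K.index + 1 ∧
      Nonempty (K ≃* FreeGroup (Fin n)) := by
  -- Mathlib's instance is for the category structure of `ActionCategory`, not the one induced
  -- by its groupoid structure; the two agree only up to unfolding.
  have : @IsConnected (ActionCategory G (G ⧸ K)) Groupoid.toCategory :=
    (inferInstance : IsConnected (ActionCategory G (G ⧸ K)))
  -- typed so that `geodesicSubtree r` is a spanning tree of the generating quiver
  let r : Symmetrify (Generators (ActionCategory G (G ⧸ K))) := objEquiv G (G ⧸ K) ↑(1 : G)
  have : RootedConnected r := generators_connected (ActionCategory G (G ⧸ K)) _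
  let T := geodesicSubtree r
  have hV : Nat.card (ActionCategory G (G ⧸ K)) = K.index := Nat.card_congr (objEquiv G _).symm
  have : Finite (ActionCategory G (G ⧸ K)) :=
    Nat.finite_of_card_ne_zero (hV ▸ FiniteIndex.index_ne_zero)
  have : Finite (Total (Generators (ActionCategory G (G ⧸ K)))) :=
    Finite.of_equiv _ (totalGeneratorsActionEquiv G _).symm
  have hrank := SpanningTree.card_cotreeArrows_add_card T
  rw [hV, card_total_generators_actionCategory] at hrank
  exact ⟨_, hrank, ⟨(endMulEquivSubgroup K).symm.trans
    ((SpanningTree.endMulEquivFreeGroup T).trans (FreeGroup.freeGroupCongr (Finite.equivFin _)))⟩⟩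

namespace Subgroup

variable {G : Type*} [Group G]

def conjTransversal (K : Subgroup G) (S : Set G) : Set K :=
  {x | ∃ c : G ⧸ K, ∃ s ∈ S, (x : G) = c.out⁻¹ * s * c.out}

theorem normalClosure_le_map_normalClosure_conjTransversal {S : Set G} {K : Subgroup G}
    (hS : normalClosure S ≤ K) :
    normalClosure S ≤ (normalClosure (K.conjTransversal S)).map K.subtype := by
  rw [normalClosure, closure_le]
  intro y hy
  obtain ⟨s, hs, hconj⟩ := Group.mem_conjugatesOfSet_iff.mp hy
  obtain ⟨f, rfl⟩ := isConj_iff.mp hconj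
  set t := (QuotientGroup.mk f⁻¹ : G ⧸ K).out
  have hk : t⁻¹ * f⁻¹ ∈ K := QuotientGroup.eq.mp (QuotientGroup.out_eq' _)
  have hw : t⁻¹ * s * t ∈ K := hS (normalClosure_normal.conj_mem' s (subset_normalClosure hs) t)
  let k : K := ⟨_, hk⟩
  let w : K := ⟨_, hw⟩
  have hw' : w ∈ normalClosure (K.conjTransversal S) := subset_normalClosure ⟨_, s, hs, rfl⟩
  refine ⟨k⁻¹ * w * k, normalClosure_normal.conj_mem' w hw' k, ?_⟩
  simp only [k, w, map_mul, map_inv, coe_subtype]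
  group

theorem normalClosure_subgroupOf_eq {S : Set G} {K : Subgroup G} (hS : normalClosure S ≤ K) :
    (normalClosure S).subgroupOf K = normalClosure (K.conjTransversal S) := by
  refine le_antisymm (fun x hx => ?_) ?_
  · obtain ⟨y, hy, hyx⟩ := normalClosure_le_map_normalClosure_conjTransversal hS hx
    rwa [← Subtype.ext hyx]
  · have := normalClosure_normal (s := S) |>.subgroupOf K
    refine normalClosure_le_normal ?_
    rintro x ⟨c, s, hs, hx⟩
    rw [SetLike.mem_coe, mem_subgroupOf, hx]
    exact normalClosure_normal.conj_mem' s (subset_normalClosure hs) _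

theorem exists_finset_coe_eq_conjTransversal (S : Finset G) (K : Subgroup G) [K.FiniteIndex]
    (hS : normalClosure (S : Set G) ≤ K) :
    ∃ T : Finset K, T.card ≤ S.card * K.index ∧ (T : Set K) = K.conjTransversal S := by
  classical
  have : Fintype (G ⧸ K) := Fintype.ofFinite _
  let f : (G ⧸ K) × S → K := fun p =>
    ⟨p.1.out⁻¹ * p.2 * p.1.out,
      hS (normalClosure_normal.conj_mem' _ (subset_normalClosure p.2.2) _)⟩
  refine ⟨Finset.univ.image f, Finset.card_image_le.trans_eq ?_, ?_⟩
  · rw [Finset.card_univ, Fintype.card_prod, Fintype.card_coe, mul_comm, index,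
      Nat.card_eq_fintype_card]
  · ext x
    simp only [Finset.coe_image, Finset.coe_univ, Set.image_univ, Set.mem_range, Prod.exists,
      Subtype.exists, conjTransversal, Set.mem_ofPred_eq, Subtype.ext_iff, f, Finset.mem_coe,
      eq_comm (a := (x : G)), exists_prop]

end Subgroup

namespace QuotientGroup

variable {G : Type*} [Group G] (N : Subgroup G) [N.Normal] (H : Subgroup (G ⧸ N))

theorem ker_subgroupComap_mk' :
    ((mk' N).subgroupComap H).ker = N.subgroupOf (H.comap (mk' N)) := by
  ext x
  rw [MonoidHom.mem_ker, Subgroup.mem_subgroupOf, ← QuotientGroup.eq_one_iff (x : G),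
    Subtype.ext_iff]
  rfl

noncomputable def comapMk'QuotientMulEquiv :
    H.comap (mk' N) ⧸ N.subgroupOf (H.comap (mk' N)) ≃* H :=
  (quotientMulEquivOfEq (ker_subgroupComap_mk' N H)).symm.trans
    (quotientKerEquivOfSurjective _
      (MonoidHom.subgroupComap_surjective_of_surjective _ _ (mk'_surjective N)))

end QuotientGroup

theorem IsFreeGroup.card_generators_freeGroup (α : Type*) :
    Nat.card (IsFreeGroup.Generators (FreeGroup α)) = Nat.card α :=
  Nat.card_congr (Equiv.ofFreeGroupEquiv (IsFreeGroup.toFreeGroup (FreeGroup α))).symm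

instance IsFreeGroup.finite_generators_freeGroup (α : Type*) [Finite α] :
    Finite (IsFreeGroup.Generators (FreeGroup α)) :=
  Finite.of_equiv α (Equiv.ofFreeGroupEquiv (IsFreeGroup.toFreeGroup (FreeGroup α)))

open Subgroup in
theorem Subgroup.exists_presentation_of_finiteIndex {G : Type u} [Group G] [IsFreeGroup G]
    [Finite (IsFreeGroup.Generators G)] (R : Finset G)
    (H : Subgroup (G ⧸ normalClosure (R : Set G))) [H.FiniteIndex] :
    ∃ n : ℕ, n + H.index = Nat.card (IsFreeGroup.Generators G) * H.index + 1 ∧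
      ∃ R' : Finset (FreeGroup (Fin n)), R'.card ≤ R.card * H.index ∧
        Nonempty (H ≃* FreeGroup (Fin n) ⧸ normalClosure (R' : Set (FreeGroup (Fin n)))) := by
  classical
  set N := normalClosure (R : Set G)
  set K := H.comap (QuotientGroup.mk' N)
  have hK : K.index = H.index := H.index_comap_of_surjective (QuotientGroup.mk'_surjective N)
  have : K.FiniteIndex := ⟨hK ▸ FiniteIndex.index_ne_zero⟩
  have hNK : N ≤ K := (QuotientGroup.ker_mk' N).ge.trans (ker_le_comap _ _)
  obtain ⟨n, hn, ⟨e⟩⟩ := K.exists_mulEquiv_freeGroup_of_finiteIndex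
  obtain ⟨T, hTcard, hT⟩ := exists_finset_coe_eq_conjTransversal R K hNK
  have hmap : (N.subgroupOf K).map (e : K →* FreeGroup (Fin n)) =
      normalClosure ((T.image e : Finset _) : Set (FreeGroup (Fin n))) := by
    rw [normalClosure_subgroupOf_eq hNK, ← hT, Finset.coe_image,
      map_normalClosure _ _ e.surjective]
    rfl
  refine ⟨n, hK ▸ hn, T.image e, Finset.card_image_le.trans (hK ▸ hTcard), ⟨?_⟩⟩
  exact (QuotientGroup.comapMk'QuotientMulEquiv N H).symm.trans (QuotientGroup.congr _ _ e hmap)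

/-- **Lemma 2.2.** If `G = F/⟪R⟫^F` with `F` free of rank `d` and `|R| = r`, and `H ≤ G`
has finite index `j`, then `H` has a presentation with `(d-1)·j + 1` generators and at
most `r·j` relators; in particular `δ(H) - 1 ≥ (δ(G) - 1)·[G : H]`. -/
theorem deficiency_of_finite_index_subgroup
    (d r j : ℕ) (R : Finset (FreeGroup (Fin d))) (hcard : R.card = r)
    (H : Subgroup (FreeGroup (Fin d) ⧸
      Subgroup.normalClosure (R : Set (FreeGroup (Fin d)))))
    (hfi : H.FiniteIndex) (hj : H.index = j) :
    (∃ n : ℕ, (n : ℤ) = ((d : ℤ) - 1) * (j : ℤ) + 1 ∧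
      ∃ R' : Finset (FreeGroup (Fin n)), R'.card ≤ r * j ∧
        Nonempty (↥H ≃*
          FreeGroup (Fin n) ⧸ Subgroup.normalClosure (R' : Set (FreeGroup (Fin n))))) ∧
    (((d : ℤ) - 1) * (j : ℤ) + 1) - (r : ℤ) * (j : ℤ) - 1 ≥
      ((d : ℤ) - (r : ℤ) - 1) * (j : ℤ) := by
  obtain ⟨n, hn, R', hR'card, hH⟩ := Subgroup.exists_presentation_of_finiteIndex R H
  rw [IsFreeGroup.card_generators_freeGroup, Nat.card_fin, hj] at hn
  subst hcard hj
  refine ⟨⟨n, ?_, R', hR'card, hH⟩, le_of_eq (by ring)⟩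
  linear_combination (norm := skip) (congrArg (Nat.cast : ℕ → ℤ) hn)
  push_cast
  ring
end

section
/- Let G be a group, K a subgroup of G, and T ⊆ G a set of left coset representatives of K in G (i.e., the map T × K → G, (t,k) ↦ tk, is a bijection). Let S ⊆ G be a subset whose normal closure N = ⟪S⟫^G in G is contained in K. Then N equals the normal closure in K of the set {t⁻¹ s t : s ∈ S, t ∈ T}, i.e., N is the subgroup generated by all elements k⁻¹ t⁻¹ s t k with s ∈ S, t ∈ T, k ∈ K. -/
/-!
Since every element of `G` factors as `t * k` with `t ∈ T`, `k ∈ K`, any conjugator can be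
written `c = (t * k)⁻¹`, and then `c * s * c⁻¹ = k⁻¹ * (t⁻¹ * s * t) * k`. So the `G`-conjugates
of `S`, which generate `⟪S⟫^G`, are exactly these elements.
-/

section

variable {G : Type*} [Group G]

theorem isConj_iff_exists_eq_conj_conj {K : Subgroup G} {T : Set G}
    (hT : Function.Surjective fun x : T × K => (x.1 : G) * x.2) {a b : G} :
    IsConj a b ↔ ∃ t ∈ T, ∃ k ∈ K, b = k⁻¹ * (t⁻¹ * a * t) * k := by
  rw [isConj_iff]
  constructor
  · rintro ⟨c, rfl⟩
    obtain ⟨⟨t, k⟩, htk : (t : G) * k = c⁻¹⟩ := hT c⁻¹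
    have hc : c = (k : G)⁻¹ * (t : G)⁻¹ := by
      rw [← mul_inv_rev, htk, inv_inv]
    exact ⟨t, t.2, k, k.2, by rw [hc]; group⟩
  · rintro ⟨t, -, k, -, rfl⟩
    exact ⟨(t * k)⁻¹, by group⟩

theorem Group.conjugatesOfSet_eq_of_mul_surjective {K : Subgroup G} {T : Set G}
    (hT : Function.Surjective fun x : T × K => (x.1 : G) * x.2) (S : Set G) :
    Group.conjugatesOfSet S =
      {x : G | ∃ s ∈ S, ∃ t ∈ T, ∃ k ∈ K, x = k⁻¹ * (t⁻¹ * s * t) * k} := by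
  ext x
  simp only [Group.mem_conjugatesOfSet_iff, isConj_iff_exists_eq_conj_conj hT, Set.mem_ofPred_eq]

end

theorem normalClosure_eq_closure_conjugates_of_le_general
    {G : Type*} [Group G] (K : Subgroup G) (T : Set G)
    (hT : Function.Bijective (fun x : T × K => (x.1 : G) * (x.2 : G)))
    (S : Set G) :
    Subgroup.normalClosure S =
      Subgroup.closure
        {x : G | ∃ s ∈ S, ∃ t ∈ T, ∃ k ∈ K, x = k⁻¹ * (t⁻¹ * s * t) * k} := by
  rw [Subgroup.normalClosure, Group.conjugatesOfSet_eq_of_mul_surjective hT.surjective]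

/-- If `T` is a set of left coset representatives of a subgroup `K ≤ G` and `S ⊆ G` has
normal closure `N = ⟪S⟫^G` contained in `K`, then `N` is the normal closure in `K` of
`{s^t : s ∈ S, t ∈ T}`, i.e. `N` is generated by the elements `(s^t)^k`,
`s ∈ S`, `t ∈ T`, `k ∈ K`. -/
theorem normalClosure_eq_closure_conjugates_of_le
    {G : Type*} [Group G] (K : Subgroup G) (T : Set G)
    (hT : Function.Bijective (fun x : T × K => (x.1 : G) * (x.2 : G)))
    (S : Set G) (hS : Subgroup.normalClosure S ≤ K) :
    Subgroup.normalClosure S =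
      Subgroup.closure
        {x : G | ∃ s ∈ S, ∃ t ∈ T, ∃ k ∈ K, x = k⁻¹ * (t⁻¹ * s * t) * k} :=
  normalClosure_eq_closure_conjugates_of_le_general K T hT S
end

section
/- Let G be a group, N a normal subgroup of G, g ∈ G, and let T ⊆ G be a set of right coset representatives of the subgroup ⟨g⟩N in G (i.e., the map ⟨g⟩N × T → G, (h,t) ↦ ht, is a bijection). Then the normal closure ⟪g⟫^G of g in G equals the subgroup of G generated by the set {n⁻¹ t⁻¹ g t n : t ∈ T, n ∈ N}. -/
set_option maxHeartbeats 1000000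


/-- **Lemma (cf. [OS, Lemma 2.3]).** If `N ⊴ G`, `g ∈ G`, and `T` is a set of right coset
representatives of `⟨g⟩N` in `G`, then `⟪g⟫^G` is generated by the elements
`(g^t)^n`, `t ∈ T`, `n ∈ N`. -/
theorem normalClosure_singleton_eq_closure_conjugates
    {G : Type*} [Group G] (N : Subgroup G) (hN : N.Normal) (g : G) (T : Set G)
    (hT : Function.Bijective
      (fun x : (Subgroup.closure {g} ⊔ N : Subgroup G) × T => (x.1 : G) * (x.2 : G))) :
    Subgroup.normalClosure {g} =
      Subgroup.closure {x : G | ∃ t ∈ T, ∃ n ∈ N, x = n⁻¹ * (t⁻¹ * g * t) * n} := by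
  haveI := hN
  have hset : Group.conjugatesOfSet {g}
      = {x : G | ∃ t ∈ T, ∃ n ∈ N, x = n⁻¹ * (t⁻¹ * g * t) * n} := by
    ext x
    rw [Group.mem_conjugatesOfSet_iff]
    constructor
    · rintro ⟨a, ha, hconj⟩
      rw [Set.mem_singleton_iff] at ha
      rw [ha] at hconj
      obtain ⟨c, rfl⟩ := isConj_iff.1 hconj
      obtain ⟨⟨h, t⟩, hx⟩ := hT.2 c⁻¹
      have hmem : (h : G) ∈ (↑(Subgroup.closure {g} ⊔ N) : Set G) := h.2
      rw [Subgroup.mul_normal] at hmem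
      obtain ⟨a, ha, b, hb, hab⟩ := hmem
      obtain ⟨k, hk⟩ := Subgroup.mem_closure_singleton.1 ha
      refine ⟨t, t.2, (t : G)⁻¹ * b * t, by simpa using hN.conj_mem b hb (t : G)⁻¹, ?_⟩
      have hc : c⁻¹ = g ^ k * b * (t : G) := by
        rw [← hx]; simp [← hab, hk]
      have hci : c = (t : G)⁻¹ * b⁻¹ * g ^ (-k) := by
        rw [← inv_inv c, hc]; group
      rw [hci]; group
    · rintro ⟨t, _, n, _, rfl⟩
      exact ⟨g, rfl, isConj_iff.2 ⟨(t * n)⁻¹, by group⟩⟩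
  rw [Subgroup.normalClosure, hset]
end

section
/- Let G be a group, N a normal subgroup of G of finite index, g ∈ G, and let m be the order of the coset gN in the finite group G/N. Suppose N ≅ F/⟪R⟫^F with F a free group of finite rank d and R ⊆ F finite with |R| = r. Let M be the image of N under the quotient map G → G/⟪g^m⟫^G. Then there exist a free group F' of rank d and a finite subset R' ⊆ F' with |R'| ≤ r + [G : N]/m such that M ≅ F'/⟪R'⟫^{F'}. -/
/-!
Put `H = N ⊔ ⟨g⟩`, a subgroup of index `[G : N]/m`. Since `g ^ m ∈ N` commutes with `g`, every
`G`-conjugate of `g ^ m` is an `N`-conjugate of `t g^m t⁻¹` for `t` in a transversal of `H`.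
Hence `⟪g^m⟫ ∩ N` is the normal closure in `N` of these `[G : H]` elements, and
`M ≅ N ⧸ (⟪g^m⟫ ∩ N)` is presented by the relators of `N` together with a lift of each of
these elements.
-/

open Subgroup QuotientGroup

namespace Subgroup

variable {G : Type*} [Group G]

noncomputable def mapMk'EquivQuotientSubgroupOf (K N : Subgroup G) [K.Normal] :
    N.map (mk' K) ≃* N ⧸ K.subgroupOf N :=
  (MulEquiv.subgroupCongr ((mk' K).domRestrict_range N)).symm.trans
    ((quotientKerEquivRange ((mk' K).domRestrict N)).symm.trans
      (quotientMulEquivOfEq (by rw [MonoidHom.ker_domRestrict, ker_mk'])))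

theorem index_sup_zpowers_mul_orderOf (N : Subgroup G) [N.Normal] (g : G) :
    (N ⊔ zpowers g).index * orderOf (g : G ⧸ N) = N.index := by
  have hcomap : N ⊔ zpowers g = (zpowers (g : G ⧸ N)).comap (mk' N) := by
    rw [← mk'_apply, ← MonoidHom.map_zpowers, comap_map_eq, ker_mk', sup_comm]
  rw [hcomap, index_comap_of_surjective _ (mk'_surjective N), ← Nat.card_zpowers]
  exact index_mul_card _

theorem exists_mem_mul_out_mul_mem (N C : Subgroup G) [N.Normal] (x : G) :
    ∃ n ∈ N, ∃ c ∈ C, x = n * (x : G ⧸ (N ⊔ C)).out * c := by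
  obtain ⟨h, hh⟩ := QuotientGroup.mk_out_eq_mul (N ⊔ C) x
  obtain ⟨n, hn, c, hc, hnc⟩ := mem_sup_of_normal_left.mp (inv_mem h.2)
  set t := (x : G ⧸ (N ⊔ C)).out
  refine ⟨t * n * t⁻¹, Normal.conj_mem ‹_› n hn t, c, hc, ?_⟩
  calc x = t * (h : G)⁻¹ := by rw [hh]; group
    _ = t * n * t⁻¹ * t * c := by rw [← hnc]; group

theorem normalClosure_singleton_subgroupOf_eq {N C : Subgroup G} [hN : N.Normal] {y : G}
    (hy : y ∈ N) (hC : C ≤ centralizer {y}) :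
    (normalClosure {y}).subgroupOf N = normalClosure (Set.range fun q : G ⧸ (N ⊔ C) =>
      (⟨q.out * y * q.out⁻¹, hN.conj_mem y hy q.out⟩ : N)) := by
  set P : Subgroup N := normalClosure (Set.range fun q : G ⧸ (N ⊔ C) =>
      (⟨q.out * y * q.out⁻¹, hN.conj_mem y hy q.out⟩ : N))
  refine le_antisymm ?_ (normalClosure_le_normal ?_)
  · suffices h : normalClosure {y} ≤ P.map N.subtype by
      intro x hx
      obtain ⟨z, hz, hzx⟩ := mem_map.mp (h hx)
      rwa [← Subtype.ext hzx]
    rw [normalClosure, closure_le]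
    intro a ha
    obtain ⟨b, hb, hconj⟩ := Group.mem_conjugatesOfSet_iff.mp ha
    obtain ⟨x, rfl⟩ := isConj_iff.mp hconj
    rw [Set.mem_singleton_iff.mp hb]
    obtain ⟨n, hn, c, hc, hx⟩ := exists_mem_mul_out_mul_mem N C x
    set t := (x : G ⧸ (N ⊔ C)).out
    have hcy : c * y * c⁻¹ = y := by
      rw [mem_centralizer_singleton_iff.mp (hC hc), mul_inv_cancel_right]
    refine ⟨⟨n, hn⟩ * ⟨t * y * t⁻¹, hN.conj_mem y hy t⟩ * ⟨n, hn⟩⁻¹,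
      normalClosure_normal.conj_mem _
        (subset_normalClosure (Set.mem_range_self (x : G ⧸ (N ⊔ C)))) _, ?_⟩
    calc n * (t * y * t⁻¹) * n⁻¹ = n * t * (c * y * c⁻¹) * t⁻¹ * n⁻¹ := by
          rw [hcy]; group
      _ = x * y * x⁻¹ := by rw [hx]; group
  · rintro _ ⟨q, rfl⟩
    exact mem_subgroupOf.mpr
      (normalClosure_normal.conj_mem y (subset_normalClosure (Set.mem_singleton y)) q.out)

theorem map_mk'_normalClosure_union (R S : Set G) :
    (normalClosure (R ∪ S)).map (mk' (normalClosure R)) =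
      normalClosure (mk' (normalClosure R) '' S) := by
  rw [normalClosure_union, map_sup, map_mk'_self, bot_sup_eq,
    map_normalClosure _ _ (mk'_surjective _)]

end Subgroup

theorem exists_finset_quotient_normalClosure_range_mulEquiv {F Γ ι : Type*} [Group F] [Group Γ]
    [Finite ι] (R : Finset F) (e : Γ ≃* F ⧸ normalClosure (R : Set F)) (s : ι → Γ) :
    ∃ R' : Finset F, R'.card ≤ R.card + Nat.card ι ∧
      Nonempty (Γ ⧸ normalClosure (Set.range s) ≃* F ⧸ normalClosure (R' : Set F)) := by
  classical
  set A := normalClosure (R : Set F)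
  have hlift : mk' A ∘ (fun i => (e (s i)).out) = e ∘ s := funext fun i => out_eq' _
  have hrange := Set.finite_range fun i => (e (s i)).out
  refine ⟨R ∪ hrange.toFinset, ?_, ⟨?_⟩⟩
  · calc (R ∪ hrange.toFinset).card ≤ R.card + hrange.toFinset.card :=
          Finset.card_union_le _ _
      _ ≤ R.card + Nat.card ι := by
        rw [← Set.ncard_eq_toFinset_card _ hrange, ← Nat.card_coe_set_eq]
        exact Nat.add_le_add_left (Finite.card_range_le _) _
  · have hmap : (normalClosure (Set.range s)).map (e : Γ →* F ⧸ A) =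
        normalClosure (mk' A '' Set.range fun i => (e (s i)).out) := by
      rw [← Set.range_comp, hlift, Set.range_comp, map_normalClosure _ _ e.surjective]
      rfl
    rw [Finset.coe_union, Set.Finite.coe_toFinset]
    exact (congr _ _ e hmap).trans ((quotientMulEquivOfEq
      (map_mk'_normalClosure_union (R : Set F) _).symm).trans
      (quotientQuotientEquivQuotient A _ (normalClosure_mono Set.subset_union_left)))

/-- **Lemma 2.3.** Let `N ⊴ G` be of finite index, `g ∈ G`, and `m` the order of `gN` in
`G/N`. If `N` has a presentation with `d` generators and `r` relators, then the image `M`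
of `N` in `Q = G/⟪g^m⟫` has a presentation with `d` generators and at most
`r + [G : N]/m` relators. -/
theorem presentation_of_image_in_quotient
    {G : Type*} [Group G] (N : Subgroup G) [N.Normal] (hfi : N.FiniteIndex)
    (g : G) (d r : ℕ) (R : Finset (FreeGroup (Fin d))) (hcard : R.card = r)
    (hiso : Nonempty (↥N ≃*
      FreeGroup (Fin d) ⧸ Subgroup.normalClosure (R : Set (FreeGroup (Fin d))))) :
    ∃ R' : Finset (FreeGroup (Fin d)),
      R'.card ≤ r + N.index / orderOf (QuotientGroup.mk g : G ⧸ N) ∧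
      Nonempty
        (↥(N.map (QuotientGroup.mk'
            (Subgroup.normalClosure
              ({g ^ orderOf (QuotientGroup.mk g : G ⧸ N)} : Set G)))) ≃*
          FreeGroup (Fin d) ⧸ Subgroup.normalClosure (R' : Set (FreeGroup (Fin d)))) := by
  obtain ⟨e⟩ := hiso
  set m := orderOf (g : G ⧸ N)
  have hgm : g ^ m ∈ N := by
    rw [← QuotientGroup.eq_one_iff, QuotientGroup.mk_pow, pow_orderOf_eq_one]
  have hm : 0 < m := orderOf_pos _
  have hcent : zpowers g ≤ centralizer {g ^ m} :=
    zpowers_le.mpr (mem_centralizer_singleton_iff.mpr (Commute.self_pow g m))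
  have : (N ⊔ zpowers g).FiniteIndex := finiteIndex_of_le le_sup_left
  obtain ⟨R', hR', ⟨e'⟩⟩ := exists_finset_quotient_normalClosure_range_mulEquiv R e
    fun q : G ⧸ (N ⊔ zpowers g) => (⟨q.out * g ^ m * q.out⁻¹, ‹N.Normal›.conj_mem _ hgm _⟩ : N)
  refine ⟨R', ?_, ⟨(mapMk'EquivQuotientSubgroupOf _ N).trans
    ((quotientMulEquivOfEq (normalClosure_singleton_subgroupOf_eq hgm hcent)).trans e')⟩⟩
  rw [← hcard, ← index_sup_zpowers_mul_orderOf N g, Nat.mul_div_cancel _ hm]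
  exact hR'
end

section
/- Every finitely generated Π-graded group is residually finite: if G is finitely generated, Π = (p_1, p_2, …) is a sequence of primes, and ⋂_{i=1}^∞ δ_i^Π(G) = {1}, then for every g ∈ G with g ≠ 1 there is a normal subgroup N of G of finite index with g ∉ N. -/
/-!
Each `δ_i^Π(G)` is characteristic, hence normal. By Schreier's lemma a finite-index subgroup `H`
of a finitely generated group is finitely generated, and `H / ([H, H] · H^p)` is a finitely
generated abelian group of exponent dividing `p`, hence finite. Inductively every `δ_i^Π(G)` has
finite index, and `Π`-gradedness says that these normal subgroups separate `g ≠ 1` from `1`.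
-/

/-- The derived `Π`-series of a group, where `p i` denotes the prime `p_{i+1}` of the
sequence `Π = (p_1, p_2, …)`:  `δ_0^Π(G) = G` and
`δ_{i+1}^Π(G) = [δ_i^Π(G), δ_i^Π(G)] · (δ_i^Π(G))^{p_{i+1}}`, the subgroup generated by
all commutators and all `p_{i+1}`-th powers of elements of `δ_i^Π(G)`. -/
def piDelta {G : Type*} [Group G] (p : ℕ → ℕ) : ℕ → Subgroup G
  | 0 => ⊤
  | i + 1 =>
      ⁅(piDelta p i : Subgroup G), (piDelta p i : Subgroup G)⁆ ⊔
        Subgroup.closure {x : G | ∃ a ∈ (piDelta p i : Subgroup G), a ^ p i = x}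

open scoped IsMulCommutative

namespace Subgroup

variable {G : Type*} [Group G]

theorem finiteIndex_of_commutator_le_of_pow_mem [Group.FG G] {N : Subgroup G} {n : ℕ}
    (hn : n ≠ 0) (hcomm : _root_.commutator G ≤ N) (hpow : ∀ g : G, g ^ n ∈ N) :
    N.FiniteIndex := by
  have := Normal.of_commutator_le (G := G) hcomm
  have : IsMulCommutative (G ⧸ N) := Normal.quotient_commutative_iff_commutator_le.mpr hcomm
  have : Group.FG (G ⧸ N) := Group.fg_of_surjective (QuotientGroup.mk'_surjective N)
  have hTorsion : IsMulTorsion (G ⧸ N) := by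
    intro x
    obtain ⟨g, rfl⟩ := QuotientGroup.mk_surjective x
    refine isOfFinOrder_iff_pow_eq_one.mpr ⟨n, Nat.pos_of_ne_zero hn, ?_⟩
    rw [← QuotientGroup.mk_pow, QuotientGroup.eq_one_iff]
    exact hpow g
  have := CommGroup.finite_of_fg_isMulTorsion _ hTorsion
  exact finiteIndex_of_finite_quotient

theorem finiteIndex_of_commutator_self_le_of_pow_mem [Group.FG G] {H K : Subgroup G}
    [H.FiniteIndex] {n : ℕ} (hn : n ≠ 0) (hcomm : ⁅H, H⁆ ≤ K)
    (hpow : ∀ a ∈ H, a ^ n ∈ K) : K.FiniteIndex := by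
  have : Group.FG H := fg_of_index_ne_zero H
  have hRel : (K.subgroupOf H).FiniteIndex := by
    refine finiteIndex_of_commutator_le_of_pow_mem hn ?_ fun a ↦ hpow a a.2
    rw [subgroupOf, ← map_le_iff_le_comap, map_subtype_commutator]
    exact hcomm
  have hInf : (K ⊓ H).FiniteIndex := by
    constructor
    rw [← relIndex_mul_index inf_le_right, inf_relIndex_right]
    exact mul_ne_zero hRel.index_ne_zero FiniteIndex.index_ne_zero
  exact finiteIndex_of_le (H := K ⊓ H) inf_le_left

instance characteristic_closure_pow (H : Subgroup G) [hH : H.Characteristic] (n : ℕ) :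
    (closure {x : G | ∃ a ∈ H, a ^ n = x}).Characteristic := by
  rw [characteristic_iff_map_le]
  intro ϕ
  rw [MonoidHom.map_closure, closure_le]
  rintro _ ⟨_, ⟨a, ha, rfl⟩, rfl⟩
  have hϕa : ϕ a ∈ H := characteristic_iff_map_le.mp hH ϕ (mem_map_of_mem _ ha)
  exact subset_closure ⟨ϕ a, hϕa, (map_pow ..).symm⟩

end Subgroup

section piDelta

variable {G : Type*} [Group G] (p : ℕ → ℕ)

instance piDelta_characteristic (i : ℕ) : (piDelta p i : Subgroup G).Characteristic := by
  induction i with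
  | zero => exact Subgroup.topCharacteristic
  | succ i ih => unfold piDelta; infer_instance

theorem piDelta_finiteIndex [Group.FG G] (hp : ∀ i, p i ≠ 0) (i : ℕ) :
    (piDelta p i : Subgroup G).FiniteIndex := by
  induction i with
  | zero => exact inferInstanceAs (⊤ : Subgroup G).FiniteIndex
  | succ i ih =>
    exact Subgroup.finiteIndex_of_commutator_self_le_of_pow_mem (hp i) le_sup_left
      fun a ha ↦ Subgroup.mem_sup_right (Subgroup.subset_closure ⟨a, ha, rfl⟩)

end piDelta

/-- Every finitely generated `Π`-graded group is residually finite. -/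
theorem residuallyFinite_of_fg_piGraded
    {G : Type*} [Group G] (hFG : Group.FG G) (p : ℕ → ℕ) (hp : ∀ i, (p i).Prime)
    (hgraded : (⨅ i : ℕ, (piDelta p (i + 1) : Subgroup G)) = ⊥) :
    ∀ g : G, g ≠ 1 → ∃ N : Subgroup G, N.Normal ∧ N.FiniteIndex ∧ g ∉ N := by
  intro g hg
  obtain ⟨i, hi⟩ : ∃ i, g ∉ (piDelta p (i + 1) : Subgroup G) := by
    by_contra! h
    exact hg (by simpa [hgraded] using Subgroup.mem_iInf.mpr h)
  exact ⟨piDelta p (i + 1), inferInstance,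
    piDelta_finiteIndex p (fun i ↦ (hp i).ne_zero) (i + 1), hi⟩
end

section
/- Let Π = (p_1, p_2, …) be a sequence of primes and let G be a torsion Π-graded group. Then for every n ≥ 0 and every x ∈ δ_n^Π(G), every prime divisor of the order of x equals p_j for some j > n. -/
lemma piDelta_succ_le {G : Type*} [Group G] (p : ℕ → ℕ) (i : ℕ) :
    (piDelta p (i + 1) : Subgroup G) ≤ piDelta p i := by
  show ⁅_, _⁆ ⊔ _ ≤ _
  refine sup_le (Subgroup.commutator_le.mpr fun g hg h hh => ?_)
    ((Subgroup.closure_le _).mpr ?_)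
  · exact mul_mem (mul_mem (mul_mem hg hh) (inv_mem hg)) (inv_mem hh)
  · rintro _ ⟨a, ha, rfl⟩
    exact pow_mem ha _

lemma piDelta_antitone {G : Type*} [Group G] (p : ℕ → ℕ) :
    Antitone fun i => (piDelta p i : Subgroup G) :=
  antitone_nat_of_succ_le (piDelta_succ_le p)

/-- **Lemma 2.4 (cf. [OO, Lemma 3.3 a)]).** If `G` is a torsion `Π`-graded group, then
for every `n` and every `x ∈ δ_n^Π(G)`, every prime divisor of the order of `x` equals
`p_j` for some `j > n` (that is, `p j` with `j ≥ n` in our `0`-based indexing of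
`Π = (p 0, p 1, …) = (p_1, p_2, …)`). -/
theorem prime_divisors_of_order_in_piDelta
    {G : Type*} [Group G] (p : ℕ → ℕ) (hp : ∀ i, (p i).Prime)
    (htor : ∀ g : G, IsOfFinOrder g)
    (hgraded : (⨅ i : ℕ, (piDelta p (i + 1) : Subgroup G)) = ⊥)
    (n : ℕ) (x : G) (hx : x ∈ (piDelta p n : Subgroup G))
    (q : ℕ) (hq : q.Prime) (hdvd : q ∣ orderOf x) :
    ∃ j : ℕ, n ≤ j ∧ p j = q := by
  by_contra h
  push_neg at h
  set y : G := x ^ (orderOf x / q) with hy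
  have hordx : orderOf x ≠ 0 := (htor x).orderOf_pos.ne'
  have hordy : orderOf y = q := orderOf_pow_orderOf_div hordx hdvd
  have hyq : y ^ q = 1 := by rw [← hordy]; exact pow_orderOf_eq_one y
  have hyn : y ∈ piDelta p n := pow_mem hx _
  -- y ∈ δ m for all m ≥ n
  have key : ∀ m, n ≤ m → y ∈ (piDelta p m : Subgroup G) := by
    intro m hm
    induction m with
    | zero => exact Nat.le_zero.mp hm ▸ hyn
    | succ m ih =>
      rcases Nat.lt_or_ge n (m + 1) with hlt | hge
      · have hym : y ∈ piDelta p m := ih (Nat.lt_succ_iff.mp hlt)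
        have hne : p m ≠ q := h m (Nat.lt_succ_iff.mp hlt)
        have hcop : Nat.Coprime (p m) q :=
          (Nat.coprime_primes (hp m) hq).mpr hne
        -- Bezout over ℤ
        have hic : IsCoprime (p m : ℤ) (q : ℤ) := by
          rw [Int.isCoprime_iff_gcd_eq_one]
          exact_mod_cast hcop
        obtain ⟨a, b, hab⟩ := hic
        have hyeq : (y ^ a) ^ (p m) = y := by
          have h1 : (y ^ a) ^ (p m) = y ^ (a * (p m : ℤ)) := by
            rw [← zpow_natCast (y ^ a) (p m), ← zpow_mul]
          have h2 : y ^ (b * (q : ℤ)) = 1 := by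
            rw [mul_comm, zpow_mul, zpow_natCast, hyq, one_zpow]
          calc (y ^ a) ^ (p m) = y ^ (a * (p m : ℤ)) * y ^ (b * (q : ℤ)) := by
                rw [h1, h2, mul_one]
            _ = y ^ (a * (p m : ℤ) + b * (q : ℤ)) := (zpow_add y _ _).symm
            _ = y := by rw [hab, zpow_one]
        have : y ∈ Subgroup.closure {z : G | ∃ c ∈ (piDelta p m : Subgroup G), c ^ p m = z} :=
          Subgroup.subset_closure ⟨y ^ a, zpow_mem hym a, hyeq⟩
        exact le_sup_right (α := Subgroup G) this
      · exact (piDelta_antitone p hge) hyn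
  have hmem : y ∈ (⨅ i : ℕ, (piDelta p (i + 1) : Subgroup G)) := by
    refine Subgroup.mem_iInf.mpr fun i => ?_
    rcases le_or_gt n (i + 1) with hle | hlt
    · exact key _ hle
    · exact piDelta_antitone p hlt.le hyn
  rw [hgraded, Subgroup.mem_bot] at hmem
  rw [hmem, orderOf_one] at hordy
  exact hq.one_lt.ne' hordy.symm
end

section
/- Let p be a prime, let Π = (p, p, …) be the constant sequence, and let G be a torsion Π-graded group. Then every subgroup H of G of finite index contains δ_n^Π(G) for some n. -/
section DerivedPiSeries

open Subgroup

variable {G Q : Type*} [Group G] [Group Q]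

def piDeltaStep (q : ℕ) (K : Subgroup G) : Subgroup G :=
  ⁅K, K⁆ ⊔ closure {x : G | ∃ a ∈ K, a ^ q = x}

theorem piDelta_succ (p : ℕ → ℕ) (n : ℕ) :
    (piDelta p (n + 1) : Subgroup G) = piDeltaStep (p n) (piDelta p n) :=
  rfl

theorem piDeltaStep_le (q : ℕ) (K : Subgroup G) : piDeltaStep q K ≤ K :=
  sup_le (commutator_le.2 fun a ha b hb => by
      rw [commutatorElement_def]
      exact mul_mem (mul_mem (mul_mem ha hb) (inv_mem ha)) (inv_mem hb))
    ((closure_le K).2 fun _ ⟨a, ha, hx⟩ => hx ▸ K.pow_mem ha q)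

theorem piDeltaStep_mono (q : ℕ) : Monotone (piDeltaStep (G := G) q) := fun _ _ hKL =>
  sup_le_sup (commutator_mono hKL hKL) <| closure_mono fun _ ⟨a, ha, hx⟩ => ⟨a, hKL ha, hx⟩

theorem map_piDeltaStep (f : G →* Q) (q : ℕ) (K : Subgroup G) :
    (piDeltaStep q K).map f = piDeltaStep q (K.map f) := by
  rw [piDeltaStep, piDeltaStep, Subgroup.map_sup, map_commutator, MonoidHom.map_closure]
  congr 2
  ext y
  constructor
  · rintro ⟨x, ⟨a, ha, rfl⟩, rfl⟩
    exact ⟨f a, mem_map_of_mem f ha, (map_pow f a q).symm⟩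
  · rintro ⟨_, ⟨a, ha, rfl⟩, rfl⟩
    exact ⟨a ^ q, ⟨a, ha, rfl⟩, map_pow f a q⟩

theorem map_piDelta_le (f : G →* Q) (p : ℕ → ℕ) (n : ℕ) :
    (piDelta p n : Subgroup G).map f ≤ piDelta p n := by
  induction n with
  | zero => exact le_top
  | succ n ih =>
    rw [piDelta_succ, piDelta_succ, map_piDeltaStep]
    exact piDeltaStep_mono _ ih

theorem piDelta_le_ker_of_piDelta_eq_bot (f : G →* Q) {p : ℕ → ℕ} {n : ℕ}
    (hn : (piDelta p n : Subgroup Q) = ⊥) : (piDelta p n : Subgroup G) ≤ f.ker := by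
  rw [← Subgroup.map_eq_bot_iff, ← le_bot_iff, ← hn]
  exact map_piDelta_le f p n

theorem mem_piDelta_of_coprime_orderOf {p : ℕ → ℕ} {x : G}
    (hx : ∀ i, (p i).Coprime (orderOf x)) (n : ℕ) : x ∈ (piDelta p n : Subgroup G) := by
  induction n with
  | zero => exact mem_top x
  | succ n ih =>
    obtain ⟨m, hm⟩ := exists_pow_eq_self_of_coprime (hx n)
    rw [piDelta_succ]
    refine mem_sup_right (subset_closure ⟨x ^ m, pow_mem ih m, ?_⟩)
    rwa [← pow_mul, mul_comm, pow_mul]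

theorem piDeltaStep_top_le_of_index_eq {q : ℕ} (hq : q.Prime) (N : Subgroup G) [N.Normal]
    (hN : N.index = q) : piDeltaStep q ⊤ ≤ N := by
  have : Fact q.Prime := ⟨hq⟩
  have : IsCyclic (G ⧸ N) := isCyclic_of_prime_card (hN ▸ N.index_eq_card.symm)
  refine sup_le (Normal.quotient_commutative_iff_commutator_le.1 inferInstance) ?_
  rw [closure_le]
  rintro _ ⟨a, -, rfl⟩
  exact hN ▸ N.pow_index_mem a

end DerivedPiSeries

namespace IsPGroup

variable {G : Type*} [Group G] {q : ℕ}

theorem of_forall_coprime_orderOf_eq_one (hq : q.Prime) (htor : ∀ g : G, IsOfFinOrder g)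
    (h : ∀ x : G, q.Coprime (orderOf x) → x = 1) : IsPGroup q G := by
  intro g
  have hg : orderOf g ≠ 0 := (htor g).orderOf_pos.ne'
  set k := (orderOf g).factorization q
  refine ⟨k, h _ ?_⟩
  rw [orderOf_pow' g (pow_ne_zero k hq.ne_zero), Nat.gcd_eq_right (Nat.ordProj_dvd _ q)]
  exact Nat.coprime_ordCompl hq hg

theorem exists_normal_subgroup_index_eq [Finite G] [Nontrivial G] (hq : q.Prime)
    (hG : IsPGroup q G) :
    ∃ M : Subgroup G, M.Normal ∧ M.index = q := by
  have : Fact q.Prime := ⟨hq⟩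
  obtain ⟨m, hm, hcard⟩ := hG.nontrivial_iff_card.1 inferInstance
  obtain ⟨M, hM⟩ := Sylow.exists_subgroup_card_pow_prime q (n := m - 1)
    (hcard ▸ Nat.pow_dvd_pow q (m.sub_le 1))
  have hindex : M.index = q := by
    have := M.card_mul_index
    rw [hM, hcard, ← Nat.sub_add_cancel hm, pow_succ, Nat.add_sub_cancel] at this
    exact (Nat.mul_left_cancel (pow_pos hq.pos _) this)
  refine ⟨M, Subgroup.normal_of_index_eq_minFac_card ?_, hindex⟩
  rw [hindex, hcard, Nat.Prime.pow_minFac hq hm.ne']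

theorem piDeltaStep_lt [Finite G] (hq : q.Prime) (hG : IsPGroup q G) {K : Subgroup G}
    (hK : K ≠ ⊥) : piDeltaStep q K < K := by
  have : Nontrivial K := (Subgroup.nontrivial_iff_ne_bot K).2 hK
  obtain ⟨M, _, hM⟩ := (hG.to_subgroup K).exists_normal_subgroup_index_eq hq
  have hMtop : M < ⊤ := lt_top_iff_ne_top.2 fun h => hq.ne_one (hM ▸ Subgroup.index_eq_one.2 h)
  calc piDeltaStep q K = (piDeltaStep q ⊤).map K.subtype := by
        rw [map_piDeltaStep, ← MonoidHom.range_eq_map, K.range_subtype]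
    _ ≤ M.map K.subtype := Subgroup.map_mono (piDeltaStep_top_le_of_index_eq hq M hM)
    _ < (⊤ : Subgroup K).map K.subtype :=
        (Subgroup.map_lt_map_iff_of_injective K.subtype_injective).2 hMtop
    _ = K := by rw [← MonoidHom.range_eq_map, K.range_subtype]

theorem exists_piDelta_eq_bot [Finite G] (hq : q.Prime) (hG : IsPGroup q G) :
    ∃ n : ℕ, (piDelta (fun _ => q) n : Subgroup G) = ⊥ := by
  by_contra! h
  refine not_strictAnti_of_wellFoundedLT (fun n => (piDelta (fun _ => q) n : Subgroup G))
    (strictAnti_nat_of_succ_lt fun n => ?_)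
  rw [piDelta_succ]
  exact hG.piDeltaStep_lt hq (h n)

end IsPGroup

/-- **Lemma 2.6.** If `Π = (p, p, …)` is a constant sequence of primes and `G` is a
torsion `Π`-graded group, then every finite-index subgroup of `G` contains some
`δ_n^Π(G)`. -/
theorem piDelta_le_of_finiteIndex_constant_prime
    {G : Type*} [Group G] (q : ℕ) (hq : q.Prime)
    (htor : ∀ g : G, IsOfFinOrder g)
    (hgraded : (⨅ i : ℕ, (piDelta (fun _ => q) (i + 1) : Subgroup G)) = ⊥)
    (H : Subgroup G) (hH : H.FiniteIndex) :
    ∃ n : ℕ, (piDelta (fun _ => q) n : Subgroup G) ≤ H := by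
  have hG : IsPGroup q G := IsPGroup.of_forall_coprime_orderOf_eq_one hq htor fun x hx => by
    rw [← Subgroup.mem_bot, ← hgraded]
    exact Subgroup.mem_iInf.2 fun i => mem_piDelta_of_coprime_orderOf (fun _ => hx) _
  have : Finite (G ⧸ H.normalCore) := Subgroup.finite_quotient_of_finiteIndex
  obtain ⟨n, hn⟩ := (hG.to_quotient H.normalCore).exists_piDelta_eq_bot hq
  refine ⟨n, le_trans ?_ H.normalCore_le⟩
  simpa only [QuotientGroup.ker_mk'] using
    piDelta_le_ker_of_piDelta_eq_bot (QuotientGroup.mk' H.normalCore) hn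
end
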